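/- Define I₃(T) := ∫₀⁴ ln(2T/ε) · tanh(ε/(2T))/ε dε for T > 0. Then there exists a constant C > 0 such that |I₃(T) + (ln(2/T))²/2 − ∫₀^∞ (ln x)²/(2·cosh²(x)) dx| ≤ C·(ln(2/T))²·exp(−4/T) for all T ∈ (0,1). -/

import Mathlib

open Real MeasureTheory Set

noncomputable section

/-- The two-dimensional density of states `N₀(ε)`, extended evenly to `(-4,4)`
and by `0` outside. -/
def N0 (ε : ℝ) : ℝ :=
  if |ε| < 4 then
    (Real.pi ^ 2)⁻¹ * ∫ u in (-2:ℝ)..(2 - |ε|),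
      (Real.sqrt (4 - u ^ 2) * Real.sqrt (4 - (u + |ε|) ^ 2))⁻¹
  else 0

/-- The three-dimensional density of states `N_{t_z}(ε)`. -/
def N3 (tz ε : ℝ) : ℝ :=
  Real.pi⁻¹ * ∫ u in (-2:ℝ)..2, N0 (tz * u + ε) / Real.sqrt (4 - u ^ 2)

/-- `tanh (x / y)` with the convention that it equals `1` when `y = 0`. -/
def thQ (x y : ℝ) : ℝ := if y = 0 then 1 else Real.tanh (x / y)

/-- The tight-binding band relation of the anisotropic 3D model. -/
def bandE (tz k₁ k₂ k₃ : ℝ) : ℝ :=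
  -2 * (Real.cos k₁ + Real.cos k₂) - 2 * tz * Real.cos k₃

/-- The integrand of the Néel-temperature equation, interpreted as `U/(4T)` where the band
relation vanishes. -/
def neelIntegrand (U tz T k₁ k₂ k₃ : ℝ) : ℝ :=
  if bandE tz k₁ k₂ k₃ = 0 then U / (4 * T)
  else U * Real.tanh (bandE tz k₁ k₂ k₃ / (2 * T)) / (2 * bandE tz k₁ k₂ k₃)

/-- The equation characterizing the Néel temperature of the anisotropic 3D model. -/
def neelEq (U tz T : ℝ) : Prop :=
  1 = (∫ k₁ in (-Real.pi)..Real.pi, ∫ k₂ in (-Real.pi)..Real.pi,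
        ∫ k₃ in (-Real.pi)..Real.pi, neelIntegrand U tz T k₁ k₂ k₃) / (2 * Real.pi) ^ 3

/-- The antiferromagnetic mean-field (gap) equation of the anisotropic 3D model. -/
def gapEq (U tz T Δ : ℝ) : Prop :=
  1 = (∫ k₁ in (-Real.pi)..Real.pi, ∫ k₂ in (-Real.pi)..Real.pi,
        ∫ k₃ in (-Real.pi)..Real.pi,
          U * thQ (Real.sqrt (Δ ^ 2 + bandE tz k₁ k₂ k₃ ^ 2)) (2 * T)
            / (2 * Real.sqrt (Δ ^ 2 + bandE tz k₁ k₂ k₃ ^ 2))) / (2 * Real.pi) ^ 3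

/-- The 2D band relation. -/
def bandE2 (k₁ k₂ : ℝ) : ℝ := -2 * (Real.cos k₁ + Real.cos k₂)

/-- The equation characterizing the 2D Néel temperature. -/
def neelEq2 (U T : ℝ) : Prop :=
  1 = (∫ k₁ in (-Real.pi)..Real.pi, ∫ k₂ in (-Real.pi)..Real.pi,
        (if bandE2 k₁ k₂ = 0 then U / (4 * T)
         else U * Real.tanh (bandE2 k₁ k₂ / (2 * T)) / (2 * bandE2 k₁ k₂))) / (2 * Real.pi) ^ 2

/-- The 2D antiferromagnetic mean-field (gap) equation. -/
def gapEq2 (U T Δ : ℝ) : Prop :=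
  1 = (∫ k₁ in (-Real.pi)..Real.pi, ∫ k₂ in (-Real.pi)..Real.pi,
        U * thQ (Real.sqrt (Δ ^ 2 + bandE2 k₁ k₂ ^ 2)) (2 * T)
          / (2 * Real.sqrt (Δ ^ 2 + bandE2 k₁ k₂ ^ 2))) / (2 * Real.pi) ^ 2

/-- The BCS-type function `J(x,y)`. -/
def Jfun (x y : ℝ) : ℝ :=
  ∫ ε in Set.Ioi (0:ℝ),
    (thQ (Real.sqrt (x ^ 2 + ε ^ 2)) (2 * y) / Real.sqrt (x ^ 2 + ε ^ 2)
      - Real.tanh (ε / 2) / ε)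

/-- `f` is the BCS gap-ratio function: for every `y ∈ [0,1)`, `f y` is the unique positive
solution `x` of `J(x,y) = 0`. -/
def IsBCS (f : ℝ → ℝ) : Prop :=
  ∀ y ∈ Set.Ico (0:ℝ) 1,
    0 < f y ∧ Jfun (f y) y = 0 ∧ ∀ x, 0 < x → Jfun x y = 0 → x = f y

/-- The function `I₃(T)` of Lemma 5.3. -/
def I3 (T : ℝ) : ℝ :=
  ∫ ε in Set.Ioo (0:ℝ) 4, Real.log (2 * T / ε) * Real.tanh (ε / (2 * T)) / ε

open Filter Topology

/-!
Substituting `ε = 2 T x` turns `I₃(T)` into `∫₀^A g` with `A = 2 / T` and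
`g x = -log x · tanh x / x`. As `g x - log² x / (2 cosh² x)` is the derivative of
`-(log² x · tanh x) / 2`, which tends to `0` at `0`, integration by parts gives
`∫₀^A g = -(log² A · tanh A) / 2 + ∫₀^A log² x / (2 cosh² x)`.
The quantity to bound is therefore `log² A · (1 - tanh A) / 2 - ∫_A^∞ log² x / (2 cosh² x)`,
and both terms are `O((log² A + 1) e^{-2A})` since `1 - tanh A ≤ 2 e^{-2A}` and
`cosh x ≥ e^x / 2`. Finally `e^{-2A} = e^{-4/T}`, and `log A ≥ log 2` absorbs the constant.
-/

namespace Real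

@[fun_prop]
theorem continuous_tanh : Continuous tanh := by
  simp_rw [funext tanh_eq_sinh_div_cosh]
  exact continuous_sinh.div continuous_cosh fun x => (cosh_pos x).ne'

theorem hasDerivAt_tanh (x : ℝ) : HasDerivAt tanh (cosh x ^ 2)⁻¹ x := by
  simp_rw [funext tanh_eq_sinh_div_cosh]
  refine ((hasDerivAt_sinh x).div (hasDerivAt_cosh x) (cosh_pos x).ne').congr_deriv ?_
  rw [← one_div, ← cosh_sq_sub_sinh_sq x]
  ring

theorem abs_tanh_le_abs (x : ℝ) : |tanh x| ≤ |x| := by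
  have hlip : LipschitzWith 1 tanh := by
    refine lipschitzWith_of_nnnorm_deriv_le (fun y => (hasDerivAt_tanh y).differentiableAt)
      fun y => ?_
    rw [(hasDerivAt_tanh y).deriv, ← NNReal.coe_le_coe, coe_nnnorm, NNReal.coe_one, norm_inv,
      norm_pow, norm_eq_abs, abs_of_pos (cosh_pos y)]
    exact inv_le_one_of_one_le₀ (one_le_pow₀ (one_le_cosh y))
  simpa using hlip.dist_le_mul x 0

theorem exp_le_two_mul_cosh (x : ℝ) : exp x ≤ 2 * cosh x := by
  rw [cosh_eq]; linarith [exp_pos (-x)]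

theorem one_sub_tanh_le (x : ℝ) : 1 - tanh x ≤ 2 * exp (-(2 * x)) := by
  have hc := cosh_pos x
  have h : 1 - tanh x = exp (-x) / cosh x := by
    rw [tanh_eq_sinh_div_cosh, ← cosh_sub_sinh]; field_simp
  rw [h, div_le_iff₀ hc]
  have : exp (-x) = exp (-(2 * x)) * exp x := by rw [← exp_add]; ring_nf
  rw [this]
  nlinarith [exp_le_two_mul_cosh x, exp_pos (-(2 * x))]

theorem log_sq_mul_sqrt_le {x : ℝ} (hx₀ : 0 < x) (hx₁ : x ≤ 1) :
    log x ^ 2 * √x ≤ 16 := by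
  have h := abs_log_mul_self_rpow_lt x (1 / 4) hx₀ hx₁ (by norm_num)
  have hsq : (log x * x ^ (1 / 4 : ℝ)) ^ 2 = log x ^ 2 * √x := by
    rw [mul_pow, ← rpow_mul_natCast hx₀.le, sqrt_eq_rpow]
    norm_num
  rw [← hsq, ← sq_abs]
  nlinarith [abs_nonneg (log x * x ^ (1 / 4 : ℝ))]

theorem log_le_log_add_sub {A x : ℝ} (hA : 1 ≤ A) (hx : A ≤ x) :
    log x ≤ log A + (x - A) := by
  have hA₀ : 0 < A := by linarith
  have h := log_le_sub_one_of_pos (div_pos (hA₀.trans_le hx) hA₀)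
  rw [log_div (by linarith) hA₀.ne', div_sub_one hA₀.ne'] at h
  linarith [div_le_self (sub_nonneg.2 hx) hA]

end Real

def tanhLogKernel (x : ℝ) : ℝ := -log x * tanh x / x

def logSqSechSq (x : ℝ) : ℝ := log x ^ 2 / (2 * cosh x ^ 2)

def tanhLogPrimitive (x : ℝ) : ℝ := -(log x ^ 2 * tanh x) / 2

theorem abs_tanhLogKernel_le (x : ℝ) : |tanhLogKernel x| ≤ |log x| := by
  rcases eq_or_ne x 0 with rfl | hx
  · simp [tanhLogKernel]
  have : |tanh x / x| ≤ 1 := by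
    rw [abs_div, div_le_one (abs_pos.2 hx)]
    exact abs_tanh_le_abs x
  rw [tanhLogKernel, mul_div_assoc, abs_mul, abs_neg]
  exact mul_le_of_le_one_right (abs_nonneg _) this

theorem measurable_tanhLogKernel : Measurable tanhLogKernel := by
  unfold tanhLogKernel; fun_prop

theorem intervalIntegrable_tanhLogKernel (a b : ℝ) :
    IntervalIntegrable tanhLogKernel volume a b :=
  intervalIntegral.intervalIntegrable_log'.abs.mono_fun'
    measurable_tanhLogKernel.aestronglyMeasurable (ae_of_all _ abs_tanhLogKernel_le)

theorem measurable_logSqSechSq : Measurable logSqSechSq := by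
  unfold logSqSechSq; fun_prop

theorem logSqSechSq_nonneg (x : ℝ) : 0 ≤ logSqSechSq x := by
  unfold logSqSechSq; positivity

theorem logSqSechSq_le_half_log_sq (x : ℝ) : logSqSechSq x ≤ log x ^ 2 / 2 := by
  unfold logSqSechSq
  gcongr
  nlinarith [one_le_cosh x]

theorem intervalIntegrable_logSqSechSq_zero_one :
    IntervalIntegrable logSqSechSq volume 0 1 := by
  refine ((intervalIntegral.intervalIntegrable_rpow' (r := -(1 / 2)) (by norm_num)).const_mul
    8).mono_fun' measurable_logSqSechSq.aestronglyMeasurable ?_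
  rw [uIoc_of_le zero_le_one, EventuallyLE, ae_restrict_iff' measurableSet_Ioc]
  refine ae_of_all _ fun x ⟨hx₀, hx₁⟩ => ?_
  have hs : 0 < √x := sqrt_pos.2 hx₀
  rw [norm_of_nonneg (logSqSechSq_nonneg x), rpow_neg hx₀.le, ← sqrt_eq_rpow]
  calc logSqSechSq x ≤ log x ^ 2 / 2 := logSqSechSq_le_half_log_sq x
    _ ≤ 8 * (√x)⁻¹ := by
      rw [← div_eq_mul_inv, le_div_iff₀ hs]
      linarith [log_sq_mul_sqrt_le hx₀ hx₁]

theorem logSqSechSq_le_two_mul_log_sq_mul_exp (x : ℝ) :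
    logSqSechSq x ≤ 2 * log x ^ 2 * exp (-(2 * x)) := by
  have hcosh : exp x ^ 2 ≤ 4 * cosh x ^ 2 := by
    nlinarith [exp_le_two_mul_cosh x, exp_pos x]
  have hexp : exp (-(2 * x)) * exp x ^ 2 = 1 := by
    rw [← exp_nat_mul, ← exp_add]; norm_num
  rw [logSqSechSq, div_le_iff₀ (by positivity)]
  nlinarith [sq_nonneg (log x), exp_pos (-(2 * x)),
    mul_le_mul_of_nonneg_left hcosh (mul_nonneg (sq_nonneg (log x)) (exp_pos (-(2 * x))).le)]

theorem logSqSechSq_le_mul_exp {A x : ℝ} (hA : 1 ≤ A) (hx : A ≤ x) :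
    logSqSechSq x ≤ (4 * log A ^ 2 + 8) * exp (-A) * exp (-x) := by
  have hlogA := log_nonneg hA
  have hlogx := log_nonneg (hA.trans hx)
  have hsq : (x - A) ^ 2 ≤ 2 * exp (x - A) := by
    linarith [quadratic_le_exp_of_nonneg (sub_nonneg.2 hx)]
  have hlog_sq : log x ^ 2 ≤ 2 * log A ^ 2 + 4 * exp (x - A) := by
    nlinarith [log_le_log_add_sub hA hx, sq_nonneg (log A - (x - A))]
  have hexp₁ : exp (-(2 * x)) ≤ exp (-A) * exp (-x) := by
    rw [← exp_add]; exact exp_le_exp.2 (by linarith)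
  have hexp₂ : exp (x - A) * exp (-(2 * x)) = exp (-A) * exp (-x) := by
    rw [← exp_add, ← exp_add]; ring_nf
  calc logSqSechSq x ≤ 2 * log x ^ 2 * exp (-(2 * x)) := logSqSechSq_le_two_mul_log_sq_mul_exp x
    _ ≤ 2 * (2 * log A ^ 2 + 4 * exp (x - A)) * exp (-(2 * x)) := by gcongr
    _ = 4 * log A ^ 2 * exp (-(2 * x)) + 8 * (exp (x - A) * exp (-(2 * x))) := by ring
    _ ≤ 4 * log A ^ 2 * (exp (-A) * exp (-x)) + 8 * (exp (-A) * exp (-x)) := by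
      rw [hexp₂]; gcongr
    _ = (4 * log A ^ 2 + 8) * exp (-A) * exp (-x) := by ring

theorem integrableOn_logSqSechSq_Ioi {A : ℝ} (hA : 1 ≤ A) :
    IntegrableOn logSqSechSq (Ioi A) := by
  refine Integrable.mono' (((integrableOn_exp_neg_Ioi A).const_mul
    ((4 * log A ^ 2 + 8) * exp (-A)))) measurable_logSqSechSq.aestronglyMeasurable ?_
  rw [ae_restrict_iff' measurableSet_Ioi]
  refine ae_of_all _ fun x hx => ?_
  rw [norm_of_nonneg (logSqSechSq_nonneg x)]
  exact logSqSechSq_le_mul_exp hA (le_of_lt hx)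

theorem integrableOn_logSqSechSq_Ioi_zero : IntegrableOn logSqSechSq (Ioi 0) := by
  rw [← Ioc_union_Ioi_eq_Ioi zero_le_one]
  exact ((intervalIntegrable_iff_integrableOn_Ioc_of_le zero_le_one).1
    intervalIntegrable_logSqSechSq_zero_one).union (integrableOn_logSqSechSq_Ioi le_rfl)

theorem setIntegral_Ioi_logSqSechSq_le {A : ℝ} (hA : 1 ≤ A) :
    ∫ x in Ioi A, logSqSechSq x ≤ (4 * log A ^ 2 + 8) * exp (-(2 * A)) := by
  calc ∫ x in Ioi A, logSqSechSq x
      ≤ ∫ x in Ioi A, (4 * log A ^ 2 + 8) * exp (-A) * exp (-x) :=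
        setIntegral_mono_on (integrableOn_logSqSechSq_Ioi hA)
          ((integrableOn_exp_neg_Ioi A).const_mul _) measurableSet_Ioi
          fun x hx => logSqSechSq_le_mul_exp hA (le_of_lt hx)
    _ = (4 * log A ^ 2 + 8) * exp (-(2 * A)) := by
      rw [integral_const_mul, integral_exp_neg_Ioi, mul_assoc, ← exp_add]
      ring_nf

theorem hasDerivAt_tanhLogPrimitive {x : ℝ} (hx : 0 < x) :
    HasDerivAt tanhLogPrimitive (tanhLogKernel x - logSqSechSq x) x := by
  have h := ((((hasDerivAt_log hx.ne').pow 2).mul (hasDerivAt_tanh x)).neg).div_const 2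
  refine h.congr_deriv ?_
  unfold tanhLogKernel logSqSechSq
  have := (cosh_pos x).ne'
  field_simp
  simp only [Pi.pow_apply]
  ring

theorem tendsto_tanhLogPrimitive_zero : Tendsto tanhLogPrimitive (𝓝[>] 0) (𝓝 0) := by
  have hsqrt : Tendsto (fun a => 8 * √a) (𝓝[>] 0) (𝓝 0) := by
    simpa using ((continuous_sqrt.tendsto 0).const_mul 8).mono_left nhdsWithin_le_nhds
  refine squeeze_zero_norm' ?_ hsqrt
  filter_upwards [Ioo_mem_nhdsGT (zero_lt_one' ℝ)] with a ⟨ha₀, ha₁⟩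
  have hs := sq_sqrt ha₀.le
  have htanh : |tanh a| ≤ a := (abs_tanh_le_abs a).trans_eq (abs_of_pos ha₀)
  -- `|tanhLogPrimitive a| ≤ log² a · a / 2 ≤ 8 √a`
  rw [tanhLogPrimitive, norm_eq_abs, abs_div, abs_neg, abs_mul, abs_of_nonneg (sq_nonneg _),
    abs_two]
  nlinarith [log_sq_mul_sqrt_le ha₀ ha₁.le, mul_le_mul_of_nonneg_left htanh (sq_nonneg (log a)),
    sqrt_nonneg a]

-- At `0` this uses the junk value `log 0 = 0`, which makes `tanhLogPrimitive 0 = 0`.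
theorem continuousOn_tanhLogPrimitive : ContinuousOn tanhLogPrimitive (Ici 0) := by
  intro x hx
  rcases (mem_Ici.1 hx).eq_or_lt with rfl | hx₀
  · rw [← continuousWithinAt_Ioi_iff_Ici, ContinuousWithinAt]
    simpa [tanhLogPrimitive] using tendsto_tanhLogPrimitive_zero
  · exact (hasDerivAt_tanhLogPrimitive hx₀).continuousAt.continuousWithinAt

theorem integral_tanhLogKernel {A : ℝ} (hA : 0 ≤ A) :
    ∫ x in 0..A, tanhLogKernel x = tanhLogPrimitive A + ∫ x in 0..A, logSqSechSq x := by
  have hp : IntervalIntegrable logSqSechSq volume 0 A :=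
    (intervalIntegrable_iff_integrableOn_Ioc_of_le hA).2
      (integrableOn_logSqSechSq_Ioi_zero.mono_set Ioc_subset_Ioi_self)
  have hk := intervalIntegrable_tanhLogKernel 0 A
  have hftc := intervalIntegral.integral_eq_sub_of_hasDerivAt_of_le hA
    (continuousOn_tanhLogPrimitive.mono Icc_subset_Ici_self)
    (fun x hx => hasDerivAt_tanhLogPrimitive hx.1) (hk.sub hp)
  rw [intervalIntegral.integral_sub hk hp] at hftc
  simp only [tanhLogPrimitive, log_zero] at hftc
  simp only [tanhLogPrimitive]
  linarith

theorem I3_eq_integral_tanhLogKernel {T : ℝ} (hT : 0 < T) :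
    I3 T = ∫ x in 0..2 / T, tanhLogKernel x := by
  have h2T : (2 * T) ≠ 0 := by positivity
  have hsubst : EqOn (fun ε => log (2 * T / ε) * tanh (ε / (2 * T)) / ε)
      (fun ε => (2 * T)⁻¹ * tanhLogKernel (ε / (2 * T))) (uIcc 0 4) := by
    intro ε _
    simp only [tanhLogKernel, ← log_inv, inv_div]
    rcases eq_or_ne ε 0 with rfl | hε
    · simp
    · field_simp
  rw [I3, ← integral_Ioc_eq_integral_Ioo, ← intervalIntegral.integral_of_le zero_le_four,
    intervalIntegral.integral_congr hsubst, intervalIntegral.integral_const_mul,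
    intervalIntegral.integral_comp_div tanhLogKernel h2T, smul_eq_mul, ← mul_assoc,
    inv_mul_cancel₀ h2T, one_mul, zero_div]
  congr 1
  field_simp
  norm_num

theorem abs_integral_tanhLogKernel_sub_le {A : ℝ} (hA : 1 ≤ A) :
    |(∫ x in 0..A, tanhLogKernel x) + log A ^ 2 / 2 - ∫ x in Ioi 0, logSqSechSq x|
      ≤ (4 * log A ^ 2 + 8) * exp (-(2 * A)) := by
  have hA₀ : 0 ≤ A := zero_le_one.trans hA
  have hsplit : ∫ x in Ioi 0, logSqSechSq x
      = (∫ x in 0..A, logSqSechSq x) + ∫ x in Ioi A, logSqSechSq x := by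
    rw [intervalIntegral.integral_of_le hA₀, ← setIntegral_union (Ioc_disjoint_Ioi le_rfl)
      measurableSet_Ioi (integrableOn_logSqSechSq_Ioi_zero.mono_set Ioc_subset_Ioi_self)
      (integrableOn_logSqSechSq_Ioi hA), Ioc_union_Ioi_eq_Ioi hA₀]
  have htail₀ : 0 ≤ ∫ x in Ioi A, logSqSechSq x :=
    setIntegral_nonneg measurableSet_Ioi fun x _ => logSqSechSq_nonneg x
  have htail := setIntegral_Ioi_logSqSechSq_le hA
  have htanh := mul_le_mul_of_nonneg_left (one_sub_tanh_le A) (sq_nonneg (log A))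
  have htanh₀ := mul_nonneg (sq_nonneg (log A)) (sub_nonneg.2 (tanh_lt_one A).le)
  have hexp := exp_pos (-(2 * A))
  rw [integral_tanhLogKernel hA₀, hsplit, tanhLogPrimitive, abs_le]
  constructor <;> nlinarith

/-- Lemma 5.3: `|I₃(T) + (ln(2/T))²/2 - ∫₀^∞ (ln x)²/(2 cosh² x) dx| ≤ C (ln(2/T))² e^{-4/T}`
for `T ∈ (0,1)`. -/
theorem I3_asymptotics :
    ∃ C > (0:ℝ), ∀ T ∈ Set.Ioo (0:ℝ) 1,
      |I3 T + (Real.log (2 / T)) ^ 2 / 2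
          - ∫ x in Set.Ioi (0:ℝ), (Real.log x) ^ 2 / (2 * Real.cosh x ^ 2)|
        ≤ C * (Real.log (2 / T)) ^ 2 * Real.exp (-4 / T) := by
  refine ⟨24, by norm_num, fun T ⟨hT₀, hT₁⟩ => ?_⟩
  have hA : 2 ≤ 2 / T := by rw [le_div_iff₀ hT₀]; linarith
  have hlog : log 2 ≤ log (2 / T) := log_le_log two_pos hA
  have hexp : exp (-4 / T) = exp (-(2 * (2 / T))) := by ring_nf
  rw [I3_eq_integral_tanhLogKernel hT₀, hexp]
  refine (abs_integral_tanhLogKernel_sub_le (by linarith)).trans ?_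
  gcongr ?_ * _
  nlinarith [log_two_gt_d9]
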